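/- arXiv:math/0403492 — 3 statements merged into one kernel-verified Lean document; each statement's English description precedes it below -/
import Mathlib

section
/- Over an algebraically closed field K, a triangular system p_1(x_1) = 0, ..., p_d(x_1,...,x_d) = 0 with p_k monic of degree n_k in x_k has fewer than n_1 ⋯ n_d distinct solutions if and only if there exist k and a solution (a_1, ..., a_{k-1}) of the first k-1 equations such that p_k(a_1, ..., a_{k-1}, ·) has a repeated root. -/
open MvPolynomial

/-- A triangular system: `p k` is monic of degree `n k` in the variable `x k`,
with all other terms involving only variables `x j`, `j ≤ k`, and of degree
less than `n k` in `x k`. -/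
def IsTriangular {K : Type*} [CommRing K] {d : ℕ} (n : Fin d → ℕ)
    (p : Fin d → MvPolynomial (Fin d) K) : Prop :=
  ∀ k : Fin d, ∃ q : MvPolynomial (Fin d) K,
    (∀ j ∈ q.vars, j ≤ k) ∧ q.degreeOf k < n k ∧ p k = X k ^ n k + q

/-- The set of common zeros of the system in `K^d`. -/
def zeroSet {K : Type*} [CommRing K] {d : ℕ}
    (p : Fin d → MvPolynomial (Fin d) K) : Set (Fin d → K) :=
  {a : Fin d → K | ∀ k, eval a (p k) = 0}

namespace Stmt12

variable {K : Type*} [Field K] {d : ℕ}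

/-- Specialization of a multivariate polynomial to a univariate one in variable `k`,
all other variables being given the values `a j`. -/
noncomputable def uni (P : MvPolynomial (Fin d) K) (k : Fin d) (a : Fin d → K) : Polynomial K :=
  aeval (fun j => if j = k then Polynomial.X else Polynomial.C (a j)) P

lemma eval_uni (P : MvPolynomial (Fin d) K) (k : Fin d) (a : Fin d → K) (t : K) :
    (uni P k a).eval t = eval (Function.update a k t) P := by
  induction P using MvPolynomial.induction_on with
  | C c => simp [uni]
  | add f g hf hg => simp only [uni, map_add, Polynomial.eval_add] at *; rw [hf, hg]
  | mul_X f j hf =>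
    simp only [uni, map_mul, aeval_X, Polynomial.eval_mul, eval_mul, eval_X] at *
    rw [hf, Function.update_apply]
    by_cases h : j = k <;> simp [h]

lemma deriv_uni (P : MvPolynomial (Fin d) K) (k : Fin d) (a : Fin d → K) :
    Polynomial.derivative (uni P k a) = uni (pderiv k P) k a := by
  induction P using MvPolynomial.induction_on with
  | C c => simp [uni, pderiv_C]
  | add f g hf hg =>
    simp only [uni, map_add, Polynomial.derivative_add] at *; rw [hf, hg]
  | mul_X f j hf =>
    simp only [uni, map_mul, aeval_X] at *
    rw [Polynomial.derivative_mul, hf, pderiv_mul]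
    by_cases h : j = k
    · subst h
      simp [uni, map_add, map_mul]
    · simp [uni, h, pderiv_X_of_ne h, map_add, map_mul]

lemma degree_uni_lt {P : MvPolynomial (Fin d) K} {k : Fin d} {m : ℕ} (hm : 0 < m)
    (hdeg : P.degreeOf k < m) (a : Fin d → K) :
    (uni P k a).degree < (m : ℕ) := by
  have huni : uni P k a = ∑ m' ∈ P.support,
      aeval (fun j => if j = k then Polynomial.X else Polynomial.C (a j))
        (monomial m' (coeff m' P)) := by
    rw [uni]; conv_lhs => rw [P.as_sum]
    rw [map_sum]
  rw [huni]
  refine lt_of_le_of_lt (Polynomial.degree_sum_le _ _) ?_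
  rw [Finset.sup_lt_iff (by exact_mod_cast WithBot.bot_lt_coe m)]
  intro m' hm'
  have h1 : m' k < m := (degreeOf_lt_iff hm).1 hdeg m' hm'
  have h2 : (aeval (fun j => if j = k then Polynomial.X else Polynomial.C (a j))
      (monomial m' (coeff m' P))).degree ≤ (m' k : ℕ) := by
    rw [aeval_monomial]
    refine le_trans (Polynomial.degree_mul_le _ _) ?_
    have hc : (algebraMap K (Polynomial K) (coeff m' P)).degree ≤ 0 := by
      rw [Polynomial.algebraMap_eq]; exact Polynomial.degree_C_le
    have hp : (m'.prod fun i e => (if i = k then Polynomial.X else Polynomial.C (a i)) ^ e).degree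
        ≤ (m' k : ℕ) := by
      rw [Finsupp.prod]
      refine le_trans (Polynomial.degree_prod_le _ _) ?_
      have : ∀ i ∈ m'.support,
          ((if i = k then Polynomial.X else Polynomial.C (a i)) ^ m' i).degree ≤
            (if i = k then (m' k : WithBot ℕ) else 0) := by
        intro i _
        by_cases h : i = k
        · subst h; simp [Polynomial.degree_X_pow]
        · simp only [if_neg h, ← Polynomial.C_pow]
          exact Polynomial.degree_C_le
      refine le_trans (Finset.sum_le_sum this) ?_
      rw [Finset.sum_ite_eq' m'.support k (fun _ => (m' k : WithBot ℕ))]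
      split <;> simp
    calc (algebraMap K (Polynomial K) (coeff m' P)).degree +
          (m'.prod fun i e => (if i = k then Polynomial.X else Polynomial.C (a i)) ^ e).degree
        ≤ 0 + (m' k : ℕ) := add_le_add hc hp
      _ = (m' k : ℕ) := zero_add _
  exact lt_of_le_of_lt h2 (by exact_mod_cast h1)

lemma eval_congr_on (P : MvPolynomial (Fin d) K) {a b : Fin d → K}
    (h : ∀ i ∈ P.vars, a i = b i) : eval a P = eval b P := by
  have : eval₂Hom (RingHom.id K) a P = eval₂Hom (RingHom.id K) b P :=
    eval₂Hom_congr' rfl (fun i hi _ => h i hi) rfl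
  simpa using this

lemma uni_congr (P : MvPolynomial (Fin d) K) (k : Fin d) {a b : Fin d → K}
    (h : ∀ i ∈ P.vars, i ≠ k → a i = b i) : uni P k a = uni P k b := by
  rw [uni, uni, aeval_def, aeval_def, ← coe_eval₂Hom, ← coe_eval₂Hom]
  refine eval₂Hom_congr' rfl (fun i hi _ => ?_) rfl
  by_cases hik : i = k
  · simp [hik]
  · simp [hik, h i hi hik]

/-- `p k` has a repeated root over the point `a`. -/
def Rep (p : Fin d → MvPolynomial (Fin d) K) (k : Fin d) (a : Fin d → K) : Prop :=
  ∃ t : K, eval (Function.update a k t) (p k) = 0 ∧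
    eval (Function.update a k t) (pderiv k (p k)) = 0

section

variable {n : Fin d → ℕ} {p : Fin d → MvPolynomial (Fin d) K}

lemma npos (htri : IsTriangular n p) (k : Fin d) : 0 < n k := by
  obtain ⟨q, -, hq2, -⟩ := htri k
  exact lt_of_le_of_lt (Nat.zero_le _) hq2

lemma uni_spec (htri : IsTriangular n p) (k : Fin d) (a : Fin d → K) :
    (uni (p k) k a).Monic ∧ (uni (p k) k a).natDegree = n k := by
  obtain ⟨q, hq1, hq2, hq3⟩ := htri k
  have hnk : 0 < n k := lt_of_le_of_lt (Nat.zero_le _) hq2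
  have hu : uni (p k) k a = Polynomial.X ^ n k + uni q k a := by
    rw [uni, hq3, map_add, map_pow, aeval_X, if_pos rfl]; rfl
  have hdq : (uni q k a).degree < (n k : ℕ) := degree_uni_lt hnk hq2 a
  refine ⟨hu ▸ Polynomial.monic_X_pow_add hdq, ?_⟩
  have hdeg : (uni (p k) k a).degree = (n k : ℕ) := by
    rw [hu]
    rw [Polynomial.degree_add_eq_left_of_degree_lt (by rwa [Polynomial.degree_X_pow]),
      Polynomial.degree_X_pow]
  exact Polynomial.natDegree_eq_of_degree_eq_some hdeg

lemma vars_p_le (htri : IsTriangular n p) (k : Fin d) :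
    ∀ i ∈ (p k).vars, i ≤ k := by
  obtain ⟨q, hq1, hq2, hq3⟩ := htri k
  intro i hi
  rw [hq3] at hi
  classical
  have := vars_add_subset (X (R := K) k ^ n k) q hi
  rw [Finset.mem_union] at this
  rcases this with h | h
  · have := vars_pow (X (R := K) k) (n k) h
    rw [vars_X] at this
    simp only [Finset.mem_singleton] at this
    exact this ▸ le_refl k
  · exact hq1 i h

lemma rep_of (htri : IsTriangular n p) (k : Fin d) {a b : Fin d → K}
    (hab : ∀ i : Fin d, i < k → a i = b i) (hrep : Rep p k a) : Rep p k b := by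
  obtain ⟨t, h1, h2⟩ := hrep
  have hvars : ∀ i ∈ (p k).vars, i ≠ k → a i = b i := fun i hi hik =>
    hab i (lt_of_le_of_ne (vars_p_le htri k i hi) hik)
  have huni : uni (p k) k a = uni (p k) k b := uni_congr _ _ hvars
  refine ⟨t, ?_, ?_⟩
  · rw [← eval_uni, ← huni, eval_uni]; exact h1
  · rw [← eval_uni, ← deriv_uni, ← huni, deriv_uni, eval_uni]; exact h2

variable [IsAlgClosed K] [DecidableEq K]

lemma card_roots_uni (htri : IsTriangular n p) (k : Fin d) (a : Fin d → K) :
    Multiset.card (uni (p k) k a).roots = n k := by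
  rw [← (uni_spec htri k a).2]
  exact Polynomial.splits_iff_card_roots.1 (IsAlgClosed.splits _)

lemma rc_le (htri : IsTriangular n p) (k : Fin d) (a : Fin d → K) :
    (uni (p k) k a).roots.toFinset.card ≤ n k :=
  (card_roots_uni htri k a) ▸ Multiset.toFinset_card_le _

lemma rc_pos (htri : IsTriangular n p) (k : Fin d) (a : Fin d → K) :
    0 < (uni (p k) k a).roots.toFinset.card := by
  rw [Finset.card_pos]
  have h := card_roots_uni htri k a
  have : (uni (p k) k a).roots ≠ 0 := by
    intro h0; rw [h0] at h; simp at h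
    exact absurd h.symm (Nat.pos_iff_ne_zero.1 (npos htri k))
  obtain ⟨t, ht⟩ := Multiset.exists_mem_of_ne_zero this
  exact ⟨t, Multiset.mem_toFinset.2 ht⟩

lemma rc_lt_iff (htri : IsTriangular n p) (k : Fin d) (a : Fin d → K) :
    (uni (p k) k a).roots.toFinset.card < n k ↔ Rep p k a := by
  have hne : uni (p k) k a ≠ 0 := (uni_spec htri k a).1.ne_zero
  have hcard := card_roots_uni htri k a
  constructor
  · intro hlt
    have hnodup : ¬ (uni (p k) k a).roots.Nodup := by
      intro hnd
      rw [Multiset.toFinset_card_eq_card_iff_nodup.2 hnd, hcard] at hlt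
      exact lt_irrefl _ hlt
    rw [Multiset.nodup_iff_count_le_one] at hnodup
    push_neg at hnodup
    obtain ⟨t, ht⟩ := hnodup
    rw [Polynomial.count_roots] at ht
    have := (Polynomial.one_lt_rootMultiplicity_iff_isRoot hne).1 ht
    refine ⟨t, ?_, ?_⟩
    · rw [← eval_uni]; exact this.1
    · rw [← eval_uni, ← deriv_uni]; exact this.2
  · rintro ⟨t, h1, h2⟩
    have hmul : 1 < (uni (p k) k a).rootMultiplicity t := by
      rw [Polynomial.one_lt_rootMultiplicity_iff_isRoot hne]
      constructor
      · rw [Polynomial.IsRoot, eval_uni]; exact h1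
      · rw [Polynomial.IsRoot, deriv_uni, eval_uni]; exact h2
    have hnodup : ¬ (uni (p k) k a).roots.Nodup := by
      rw [Multiset.nodup_iff_count_le_one]
      push_neg
      exact ⟨t, by rwa [Polynomial.count_roots]⟩
    rw [← hcard]
    rcases lt_or_eq_of_le (Multiset.toFinset_card_le (uni (p k) k a).roots) with h | h
    · exact h
    · exact absurd (Multiset.toFinset_card_eq_card_iff_nodup.1 h) hnodup

end

/-- The finite set of solutions of the first `k` equations, with all coordinates of
index `≥ k` set to `0`. -/
noncomputable def solF [DecidableEq K] (p : Fin d → MvPolynomial (Fin d) K) :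
    ℕ → Finset (Fin d → K)
  | 0 => {fun _ => 0}
  | (k+1) =>
    if h : k < d then
      (solF p k).biUnion fun b =>
        ((uni (p ⟨k, h⟩) ⟨k, h⟩ b).roots.toFinset).image fun t => Function.update b ⟨k, h⟩ t
    else solF p k

lemma mem_solF_succ [DecidableEq K] {p : Fin d → MvPolynomial (Fin d) K} {k : ℕ} (h : k < d)
    {b : Fin d → K} :
    b ∈ solF p (k+1) ↔ ∃ c ∈ solF p k, ∃ t ∈ (uni (p ⟨k, h⟩) ⟨k, h⟩ c).roots,
      b = Function.update c ⟨k, h⟩ t := by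
  rw [solF]
  rw [dif_pos h]
  simp only [Finset.mem_biUnion, Finset.mem_image, Multiset.mem_toFinset]
  constructor
  · rintro ⟨c, hc, t, ht, rfl⟩; exact ⟨c, hc, t, ht, rfl⟩
  · rintro ⟨c, hc, t, ht, rfl⟩; exact ⟨c, hc, t, ht, rfl⟩

section

variable {n : Fin d → ℕ} {p : Fin d → MvPolynomial (Fin d) K}
variable [IsAlgClosed K] [DecidableEq K]

lemma mem_solF_iff (htri : IsTriangular n p) : ∀ {k : ℕ}, k ≤ d → ∀ {b : Fin d → K},
    (b ∈ solF p k ↔ ((∀ j : Fin d, (j : ℕ) < k → eval b (p j) = 0) ∧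
      ∀ j : Fin d, k ≤ (j : ℕ) → b j = 0)) := by
  intro k
  induction k with
  | zero =>
    intro _ b
    simp only [solF, Finset.mem_singleton]
    constructor
    · rintro rfl; exact ⟨fun j hj => absurd hj (Nat.not_lt_zero _), fun j _ => rfl⟩
    · rintro ⟨-, h2⟩; funext i; exact h2 i (Nat.zero_le _)
  | succ k ih =>
    intro hk b
    have h : k < d := hk
    rw [mem_solF_succ h]
    constructor
    · rintro ⟨c, hc, t, ht, rfl⟩
      obtain ⟨hc1, hc2⟩ := (ih (le_of_lt h)).1 hc
      refine ⟨?_, ?_⟩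
      · intro j hj
        rcases Nat.lt_succ_iff_lt_or_eq.1 hj with hj' | hj'
        · have heval : eval (Function.update c ⟨k, h⟩ t) (p j) = eval c (p j) := by
            refine eval_congr_on _ (fun i hi => ?_)
            have hile : (i : ℕ) ≤ (j : ℕ) := vars_p_le htri j i hi
            have hik : i ≠ (⟨k, h⟩ : Fin d) := by
              intro hcon
              have : (i : ℕ) = k := congrArg Fin.val hcon
              omega
            rw [Function.update_of_ne hik]
          rw [heval]; exact hc1 j hj'
        · have hjk : j = (⟨k, h⟩ : Fin d) := Fin.ext hj'
          subst hjk
          rw [← eval_uni]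
          exact (Polynomial.mem_roots'.1 ht).2
      · intro j hj
        have hj' : j ≠ (⟨k, h⟩ : Fin d) := by
          intro hcon
          have : (j : ℕ) = k := congrArg Fin.val hcon
          omega
        rw [Function.update_of_ne hj']
        exact hc2 j (by omega)
    · rintro ⟨H1, H2⟩
      refine ⟨Function.update b ⟨k, h⟩ 0, ?_, b ⟨k, h⟩, ?_, ?_⟩
      · refine (ih (le_of_lt h)).2 ⟨?_, ?_⟩
        · intro j hj
          have heval : eval (Function.update b ⟨k, h⟩ 0) (p j) = eval b (p j) := by
            refine eval_congr_on _ (fun i hi => ?_)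
            have hile : (i : ℕ) ≤ (j : ℕ) := vars_p_le htri j i hi
            have hik : i ≠ (⟨k, h⟩ : Fin d) := by
              intro hcon
              have : (i : ℕ) = k := congrArg Fin.val hcon
              omega
            rw [Function.update_of_ne hik]
          rw [heval]; exact H1 j (Nat.lt_succ_of_lt hj)
        · intro j hj
          by_cases hjk : j = (⟨k, h⟩ : Fin d)
          · subst hjk; rw [Function.update_self]
          · rw [Function.update_of_ne hjk]
            refine H2 j ?_
            have : (j : ℕ) ≠ k := fun hcon => hjk (Fin.ext hcon)
            omega
      · rw [Polynomial.mem_roots']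
        refine ⟨(uni_spec htri ⟨k, h⟩ _).1.ne_zero, ?_⟩
        rw [Polynomial.IsRoot, eval_uni]
        have heq : Function.update (Function.update b ⟨k, h⟩ 0) ⟨k, h⟩ (b ⟨k, h⟩) = b := by
          rw [Function.update_idem, Function.update_eq_self]
        rw [heq]
        exact H1 ⟨k, h⟩ (Nat.lt_succ_self k)
      · rw [Function.update_idem, Function.update_eq_self]

lemma card_solF_succ (htri : IsTriangular n p) {k : ℕ} (h : k < d) :
    (solF p (k+1)).card
      = ∑ b ∈ solF p k, (uni (p ⟨k, h⟩) ⟨k, h⟩ b).roots.toFinset.card := by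
  classical
  have hdisj : ∀ b₁ ∈ solF p k, ∀ b₂ ∈ solF p k, b₁ ≠ b₂ →
      Disjoint
        (((uni (p ⟨k, h⟩) ⟨k, h⟩ b₁).roots.toFinset).image fun t => Function.update b₁ ⟨k, h⟩ t)
        (((uni (p ⟨k, h⟩) ⟨k, h⟩ b₂).roots.toFinset).image fun t =>
          Function.update b₂ ⟨k, h⟩ t) := by
    intro b₁ h1 b₂ h2 hne
    rw [Finset.disjoint_left]
    rintro x hx1 hx2
    simp only [Finset.mem_image, Multiset.mem_toFinset] at hx1 hx2
    obtain ⟨t₁, -, rfl⟩ := hx1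
    obtain ⟨t₂, -, heq⟩ := hx2
    apply hne
    have hb₁ := ((mem_solF_iff htri (le_of_lt h)).1 h1).2 ⟨k, h⟩ (le_refl k)
    have hb₂ := ((mem_solF_iff htri (le_of_lt h)).1 h2).2 ⟨k, h⟩ (le_refl k)
    funext i
    by_cases hik : i = (⟨k, h⟩ : Fin d)
    · subst hik; rw [hb₁, hb₂]
    · have := congrFun heq i
      rw [Function.update_of_ne hik, Function.update_of_ne hik] at this
      exact this.symm
  rw [solF, dif_pos h, Finset.card_biUnion hdisj]

  refine Finset.sum_congr rfl fun b _ => ?_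
  exact Finset.card_image_of_injective _
    (fun t₁ t₂ ht => by
      have := congrFun ht ⟨k, h⟩
      rwa [Function.update_self, Function.update_self] at this)

lemma prodP_succ {k : ℕ} (h : k < d) :
    (∏ j ∈ Finset.univ.filter (fun j : Fin d => (j : ℕ) < k + 1), n j)
      = (∏ j ∈ Finset.univ.filter (fun j : Fin d => (j : ℕ) < k), n j) * n ⟨k, h⟩ := by
  classical
  have hins : Finset.univ.filter (fun j : Fin d => (j : ℕ) < k + 1)
      = insert (⟨k, h⟩ : Fin d) (Finset.univ.filter (fun j : Fin d => (j : ℕ) < k)) := by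
    ext j
    simp only [Finset.mem_filter, Finset.mem_univ, true_and, Finset.mem_insert, Fin.ext_iff]
    omega
  rw [hins, Finset.prod_insert (by simp)]
  ring

lemma main (htri : IsTriangular n p) :
    ∀ k : ℕ, k ≤ d →
      (solF p k).Nonempty ∧
      (solF p k).card ≤ (∏ j ∈ Finset.univ.filter (fun j : Fin d => (j : ℕ) < k), n j) ∧
      ((solF p k).card < (∏ j ∈ Finset.univ.filter (fun j : Fin d => (j : ℕ) < k), n j) ↔
        ∃ j : Fin d, (j : ℕ) < k ∧ ∃ b ∈ solF p (j : ℕ), Rep p j b) := by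
  intro k
  induction k with
  | zero =>
    intro _
    refine ⟨⟨fun _ => 0, by simp [solF]⟩, by simp [solF], by simp [solF]⟩
  | succ k ih =>
    intro hk
    have h : k < d := hk
    obtain ⟨hne, hle, hiff⟩ := ih (le_of_lt h)
    have hcard := card_solF_succ htri h
    have hP := prodP_succ (n := n) h
    have hrcle : ∀ b ∈ solF p k,
        (uni (p ⟨k, h⟩) ⟨k, h⟩ b).roots.toFinset.card ≤ n ⟨k, h⟩ :=
      fun b _ => rc_le htri ⟨k, h⟩ b
    have hsum_le : (∑ b ∈ solF p k, (uni (p ⟨k, h⟩) ⟨k, h⟩ b).roots.toFinset.card)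
        ≤ (solF p k).card * n ⟨k, h⟩ := by
      calc (∑ b ∈ solF p k, (uni (p ⟨k, h⟩) ⟨k, h⟩ b).roots.toFinset.card)
          ≤ ∑ _b ∈ solF p k, n ⟨k, h⟩ := Finset.sum_le_sum hrcle
        _ = (solF p k).card * n ⟨k, h⟩ := by rw [Finset.sum_const, smul_eq_mul]
    refine ⟨?_, ?_, ?_⟩
    · rw [← Finset.card_pos, hcard]
      obtain ⟨b0, hb0⟩ := hne
      exact lt_of_lt_of_le (rc_pos htri ⟨k, h⟩ b0)
        (Finset.single_le_sum
          (f := fun b => (uni (p ⟨k, h⟩) ⟨k, h⟩ b).roots.toFinset.card)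
          (fun _ _ => Nat.zero_le _) hb0)
    · rw [hcard, hP]
      exact le_trans hsum_le (Nat.mul_le_mul_right _ hle)
    · rw [hcard, hP]
      constructor
      · intro hlt
        by_contra hcon
        push_neg at hcon
        have hcardeq : (solF p k).card
            = ∏ j ∈ Finset.univ.filter (fun j : Fin d => (j : ℕ) < k), n j := by
          rcases lt_or_eq_of_le hle with h' | h'
          · exfalso
            obtain ⟨j, hj, b, hb, hrep⟩ := hiff.1 h'
            exact hcon j (Nat.lt_succ_of_lt hj) b hb hrep
          · exact h'
        have hrceq : ∀ b ∈ solF p k,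
            (uni (p ⟨k, h⟩) ⟨k, h⟩ b).roots.toFinset.card = n ⟨k, h⟩ := by
          intro b hb
          rcases lt_or_eq_of_le (rc_le htri ⟨k, h⟩ b) with h' | h'
          · exact absurd ((rc_lt_iff htri ⟨k, h⟩ b).1 h')
              (hcon ⟨k, h⟩ (Nat.lt_succ_self k) b hb)
          · exact h'
        rw [Finset.sum_congr rfl hrceq, Finset.sum_const, smul_eq_mul, hcardeq] at hlt
        exact lt_irrefl _ hlt
      · rintro ⟨j, hj, b, hb, hrep⟩
        rcases Nat.lt_succ_iff_lt_or_eq.1 hj with hj' | hj'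
        · have hlt : (solF p k).card
              < ∏ j ∈ Finset.univ.filter (fun j : Fin d => (j : ℕ) < k), n j :=
            hiff.2 ⟨j, hj', b, hb, hrep⟩
          exact lt_of_le_of_lt hsum_le ((Nat.mul_lt_mul_right (npos htri ⟨k, h⟩)).2 hlt)
        · have hjk : j = (⟨k, h⟩ : Fin d) := Fin.ext hj'
          rw [hjk] at hrep
          rw [hj'] at hb
          have hlt : (∑ b ∈ solF p k, (uni (p ⟨k, h⟩) ⟨k, h⟩ b).roots.toFinset.card)
              < ∑ _b ∈ solF p k, n ⟨k, h⟩ :=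
            Finset.sum_lt_sum hrcle ⟨b, hb, (rc_lt_iff htri ⟨k, h⟩ b).2 hrep⟩
          rw [Finset.sum_const, smul_eq_mul] at hlt
          exact lt_of_lt_of_le hlt (Nat.mul_le_mul_right _ hle)

end

end Stmt12

theorem stmt_12 {K : Type*} [Field K] [IsAlgClosed K] {d : ℕ}
    (n : Fin d → ℕ) (p : Fin d → MvPolynomial (Fin d) K)
    (htri : IsTriangular n p) :
    (zeroSet p).ncard < ∏ k, n k ↔
      ∃ k : Fin d, ∃ a : Fin d → K, (∀ j < k, eval a (p j) = 0) ∧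
        ∃ t : K, eval (Function.update a k t) (p k) = 0 ∧
          eval (Function.update a k t) (pderiv k (p k)) = 0 := by
  classical
  have hzs : zeroSet p = ↑(Stmt12.solF p d) := by
    ext a
    rw [Finset.mem_coe, Stmt12.mem_solF_iff htri (le_refl d)]
    constructor
    · intro ha
      exact ⟨fun j _ => ha j, fun j hj => absurd j.isLt (not_lt.2 hj)⟩
    · rintro ⟨h1, -⟩ k
      exact h1 k k.isLt
  have hprod : (∏ k, n k)
      = ∏ j ∈ Finset.univ.filter (fun j : Fin d => (j : ℕ) < d), n j := by
    rw [Finset.filter_true_of_mem (fun j _ => j.isLt)]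
  rw [hzs, Set.ncard_coe_finset, hprod, (Stmt12.main htri d (le_refl d)).2.2]
  constructor
  · rintro ⟨j, -, b, hb, hrep⟩
    refine ⟨j, b, ?_, hrep⟩
    intro i hi
    exact ((Stmt12.mem_solF_iff htri (le_of_lt j.isLt)).1 hb).1 i hi
  · rintro ⟨k, a, ha, hrep⟩
    refine ⟨k, k.isLt, ?_⟩
    set b : Fin d → K := fun i => if (i : ℕ) < (k : ℕ) then a i else 0 with hbdef
    refine ⟨b, ?_, ?_⟩
    · rw [Stmt12.mem_solF_iff htri (le_of_lt k.isLt)]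
      refine ⟨?_, ?_⟩
      · intro j hj
        have heval : eval b (p j) = eval a (p j) := by
          refine Stmt12.eval_congr_on _ (fun i hi => ?_)
          have hile : (i : ℕ) ≤ (j : ℕ) := Stmt12.vars_p_le htri j i hi
          simp only [hbdef]
          rw [if_pos (by omega)]
        rw [heval]
        exact ha j hj
      · intro j hj
        simp only [hbdef]
        rw [if_neg (by omega)]
    · refine Stmt12.rep_of htri k (fun i hik => ?_) hrep
      simp only [hbdef]
      rw [if_pos (show (i : ℕ) < (k : ℕ) from hik)]
end

section
/- The ideal generated by a triangular system p_1, ..., p_d (p_k ∈ K[x_1,...,x_k] monic of degree n_k in x_k) is such that the quotient ring K[x_1, ..., x_d]/(p_1, ..., p_d) is a free K-module with basis the images of the monomials x_1^{i_1} ⋯ x_d^{i_d}, 0 ≤ i_k < n_k; in particular the quotient has K-dimension n_1 ⋯ n_d. -/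
/-!
Eliminating the last variable identifies `K[x₁, …, x_{d+1}]` with `A[X]` for
`A = K[x₁, …, x_d]`, and turns the ideal `(p₁, …, p_{d+1})` into `I[X] + (f)` with
`I = (p₁, …, p_d)` and `f = p_{d+1}` monic of degree `n_{d+1}` in `X`. The quotient is
therefore `(A/I)[X]/(f mod I)`, free over `A/I` on `1, X, …, X^(n_{d+1} - 1)`, and by
induction `A/I` is free over `K` on the monomials in `x₁, …, x_d`; the tower of the two
bases is the monomial basis.
-/

open MvPolynomial

namespace Polynomial

variable {R A : Type*} [CommRing R] [CommRing A] [Algebra R A] (I : Ideal A)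

theorem ker_mk_comp_mapRingHom (f : A[X]) :
    RingHom.ker ((Ideal.Quotient.mk (Ideal.span {f.map (Ideal.Quotient.mk I)})).comp
      (mapRingHom (Ideal.Quotient.mk I))) = I.map C ⊔ Ideal.span {f} := by
  rw [← RingHom.comap_ker, Ideal.mk_ker, ← coe_mapRingHom, ← Set.image_singleton,
    ← Ideal.map_span,
    Ideal.comap_map_of_surjective' _ (map_surjective _ Ideal.Quotient.mk_surjective),
    ker_mapRingHom, Ideal.mk_ker, sup_comm]

theorem exists_basis_quotient_map_C_sup_span_monic [Nontrivial (A ⧸ I)] {ι : Type*}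
    (b : Module.Basis ι R (A ⧸ I)) (a : ι → A) (hb : ∀ i, b i = Ideal.Quotient.mk I (a i))
    {f : A[X]} (hf : f.Monic) :
    ∃ B : Module.Basis (ι × Fin f.natDegree) R (A[X] ⧸ (I.map C ⊔ Ideal.span {f})),
      ∀ i j, B (i, j) = Ideal.Quotient.mk _ (C (a i) * X ^ (j : ℕ)) := by
  set g := f.map (Ideal.Quotient.mk I)
  let φ : A[X] →ₐ[R] AdjoinRoot g :=
    (Ideal.Quotient.mkₐ R _).comp (mapAlgHom (Ideal.Quotient.mkₐ R I))
  have hφ : Function.Surjective φ :=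
    Ideal.Quotient.mk_surjective.comp (map_surjective _ Ideal.Quotient.mk_surjective)
  have hker : RingHom.ker φ = I.map C ⊔ Ideal.span {f} := ker_mk_comp_mapRingHom I f
  let e : (A[X] ⧸ (I.map C ⊔ Ideal.span {f})) ≃ₐ[R] AdjoinRoot g :=
    (Ideal.quotientEquivAlgOfEq R hker).symm.trans (Ideal.quotientKerAlgEquivOfSurjective hφ)
  have he : ∀ x, e (Ideal.Quotient.mk _ x) = φ x := fun x => rfl
  have hg : g.Monic := hf.map _
  refine ⟨((b.smulTower (AdjoinRoot.powerBasis' hg).basis).map e.symm.toLinearEquiv).reindex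
    (Equiv.prodCongr (Equiv.refl ι) (finCongr (hf.natDegree_map _))), fun i j => ?_⟩
  have hφ_val : φ (C (a i) * X ^ (j : ℕ)) = b i • AdjoinRoot.root g ^ (j : ℕ) := by
    change AdjoinRoot.mk g ((C (a i) * X ^ (j : ℕ)).map (Ideal.Quotient.mk I)) = _
    rw [Polynomial.map_mul, Polynomial.map_pow, map_C, map_X, map_mul, map_pow, AdjoinRoot.mk_C,
      AdjoinRoot.mk_X, hb, Algebra.smul_def]
    rfl
  rw [Module.Basis.reindex_apply, Module.Basis.map_apply, Module.Basis.smulTower_apply,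
    AlgEquiv.toLinearEquiv_apply, AlgEquiv.symm_apply_eq, he, hφ_val, PowerBasis.basis_eq_pow]
  rfl

end Polynomial

namespace MvPolynomial

variable (R : Type*) [CommRing R] (d : ℕ)

noncomputable def finSuccLastEquiv :
    MvPolynomial (Fin (d + 1)) R ≃ₐ[R] Polynomial (MvPolynomial (Fin d) R) :=
  (renameEquiv R finSuccEquivLast).trans (optionEquivLeft R (Fin d))

variable {R d}

@[simp]
theorem finSuccLastEquiv_X_last : finSuccLastEquiv R d (X (Fin.last d)) = Polynomial.X := by
  simp [finSuccLastEquiv, optionEquivLeft_X_none]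

@[simp]
theorem finSuccLastEquiv_X_castSucc (j : Fin d) :
    finSuccLastEquiv R d (X j.castSucc) = Polynomial.C (X j) := by
  simp [finSuccLastEquiv, optionEquivLeft_X_some]

theorem finSuccLastEquiv_rename_castSucc (φ : MvPolynomial (Fin d) R) :
    finSuccLastEquiv R d (rename Fin.castSucc φ) = Polynomial.C φ := by
  have : ((finSuccLastEquiv R d).toAlgHom.comp (rename Fin.castSucc)) = Polynomial.CAlgHom :=
    algHom_ext fun j => by simp
  exact DFunLike.congr_fun this φ

theorem natDegree_finSuccLastEquiv (φ : MvPolynomial (Fin (d + 1)) R) :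
    (finSuccLastEquiv R d φ).natDegree = degreeOf (Fin.last d) φ := by
  simp only [finSuccLastEquiv, AlgEquiv.trans_apply, renameEquiv_apply, natDegree_optionEquivLeft]
  simpa using degreeOf_rename_of_injective (p := φ) finSuccEquivLast.injective (Fin.last d)

theorem finSuccLastEquiv_prod_X_pow (m : Fin (d + 1) → ℕ) :
    finSuccLastEquiv R d (∏ k, X k ^ m k) =
      Polynomial.C (∏ j, X j ^ m j.castSucc) * Polynomial.X ^ m (Fin.last d) := by
  simp [Fin.prod_univ_castSucc, map_prod]

theorem map_span_range_finSuccLastEquiv (p : Fin (d + 1) → MvPolynomial (Fin (d + 1)) R)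
    (p' : Fin d → MvPolynomial (Fin d) R)
    (hp' : ∀ j, rename Fin.castSucc (p' j) = p j.castSucc) :
    (Ideal.span (Set.range p)).map (finSuccLastEquiv R d) =
      (Ideal.span (Set.range p')).map Polynomial.C ⊔
        Ideal.span {finSuccLastEquiv R d (p (Fin.last d))} := by
  have hC : ∀ j, finSuccLastEquiv R d (p j.castSucc) = Polynomial.C (p' j) := fun j => by
    rw [← hp', finSuccLastEquiv_rename_castSucc]
  rw [Ideal.map_span, Ideal.map_span, ← Ideal.span_union]
  congr 1
  ext y
  simp [Fin.exists_fin_succ', hC, eq_comm, or_comm]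

end MvPolynomial

section Triangular

variable {R : Type*} [CommRing R] {d : ℕ}

theorem IsTriangular.pos {n : Fin d → ℕ} {p : Fin d → MvPolynomial (Fin d) R}
    (h : IsTriangular n p) (k : Fin d) : 0 < n k := by
  obtain ⟨q, -, hdeg, -⟩ := h k
  exact (Nat.zero_le _).trans_lt hdeg

theorem IsTriangular.exists_rename_castSucc {n : Fin (d + 1) → ℕ}
    {p : Fin (d + 1) → MvPolynomial (Fin (d + 1)) R} (h : IsTriangular n p) :
    ∃ p' : Fin d → MvPolynomial (Fin d) R, IsTriangular (fun j => n j.castSucc) p' ∧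
      ∀ j, rename Fin.castSucc (p' j) = p j.castSucc := by
  have hinj := Fin.castSucc_injective d
  have key : ∀ j : Fin d, ∃ q' : MvPolynomial (Fin d) R, (∀ m ∈ q'.vars, m ≤ j) ∧
      q'.degreeOf j < n j.castSucc ∧
      rename Fin.castSucc (X j ^ n j.castSucc + q') = p j.castSucc := by
    intro j
    obtain ⟨q, hvars, hdeg, hpq⟩ := h j.castSucc
    obtain ⟨q', rfl⟩ := exists_rename_eq_of_vars_subset_range q Fin.castSucc hinj fun m hm =>
      Fin.exists_castSucc_eq.mpr (hvars m hm |>.trans_lt (Fin.castSucc_lt_last j)).ne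
    refine ⟨q', fun m hm => ?_, ?_, by rw [hpq, map_add, map_pow, rename_X]⟩
    · refine Fin.castSucc_le_castSucc_iff.mp (hvars _ ?_)
      rwa [mem_vars_iff_degreeOf_ne_zero, degreeOf_rename_of_injective hinj,
        ← mem_vars_iff_degreeOf_ne_zero]
    · rwa [degreeOf_rename_of_injective hinj] at hdeg
  choose q' hvars hdeg hrename using key
  exact ⟨fun j => X j ^ n j.castSucc + q' j, fun j => ⟨q' j, hvars j, hdeg j, rfl⟩, hrename⟩

theorem IsTriangular.monic_finSuccLastEquiv_last [Nontrivial R] {n : Fin (d + 1) → ℕ}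
    {p : Fin (d + 1) → MvPolynomial (Fin (d + 1)) R} (h : IsTriangular n p) :
    (finSuccLastEquiv R d (p (Fin.last d))).Monic ∧
      (finSuccLastEquiv R d (p (Fin.last d))).natDegree = n (Fin.last d) := by
  obtain ⟨q, -, hdeg, hpq⟩ := h (Fin.last d)
  have hlt : (finSuccLastEquiv R d q).degree <
      (Polynomial.X ^ n (Fin.last d) : Polynomial (MvPolynomial (Fin d) R)).degree := by
    rw [Polynomial.degree_X_pow]
    refine Polynomial.degree_le_natDegree.trans_lt ?_
    exact_mod_cast (natDegree_finSuccLastEquiv q).trans_lt hdeg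
  rw [hpq, map_add, map_pow, finSuccLastEquiv_X_last]
  refine ⟨Polynomial.monic_X_pow_add (by rwa [Polynomial.degree_X_pow] at hlt), ?_⟩
  rw [Polynomial.natDegree_add_eq_left_of_degree_lt hlt, Polynomial.natDegree_X_pow]

theorem IsTriangular.exists_basis [Nontrivial R] {n : Fin d → ℕ}
    {p : Fin d → MvPolynomial (Fin d) R} (h : IsTriangular n p) :
    ∃ B : Module.Basis (∀ k, Fin (n k)) R (MvPolynomial (Fin d) R ⧸ Ideal.span (Set.range p)),
      ∀ i, B i = Ideal.Quotient.mk _ (∏ k, X k ^ (i k : ℕ)) := by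
  induction d with
  | zero =>
    have hbot : Ideal.span (Set.range p) = ⊥ := by simp [Set.range_eq_empty]
    let e : R ≃ₐ[R] MvPolynomial (Fin 0) R ⧸ Ideal.span (Set.range p) :=
      (isEmptyAlgEquiv R (Fin 0)).symm.trans
        ((AlgEquiv.quotientBot R _).symm.trans (Ideal.quotientEquivAlgOfEq R hbot.symm))
    exact ⟨(Module.Basis.singleton _ R).map e.toLinearEquiv, fun i => by simp⟩
  | succ d ih =>
    obtain ⟨p', h', hp'⟩ := h.exists_rename_castSucc
    obtain ⟨b, hb⟩ := ih h'
    have : Nontrivial (MvPolynomial (Fin d) R ⧸ Ideal.span (Set.range p')) :=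
      ⟨⟨_, 0, b.ne_zero fun j => ⟨0, h'.pos j⟩⟩⟩
    obtain ⟨hmonic, hdeg⟩ := h.monic_finSuccLastEquiv_last
    obtain ⟨B, hB⟩ := Polynomial.exists_basis_quotient_map_C_sup_span_monic _ b _ hb hmonic
    let e := Ideal.quotientEquivAlg (R₁ := R) _ _ (finSuccLastEquiv R d)
      (map_span_range_finSuccLastEquiv p p' hp').symm
    refine ⟨(B.map e.symm.toLinearEquiv).reindex ((Equiv.prodComm _ _).trans
      (((finCongr hdeg).prodCongr (Equiv.refl _)).trans (Fin.snocEquiv fun k => Fin (n k)))),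
      fun i => ?_⟩
    rw [Module.Basis.reindex_apply, Module.Basis.map_apply, AlgEquiv.toLinearEquiv_apply,
      AlgEquiv.symm_apply_eq]
    exact (hB _ _).trans (congrArg _ (finSuccLastEquiv_prod_X_pow fun k => (i k : ℕ)).symm)

end Triangular

theorem stmt_13 {K : Type*} [Field K] {d : ℕ}
    (n : Fin d → ℕ) (p : Fin d → MvPolynomial (Fin d) K)
    (htri : IsTriangular n p) :
    ∃ B : Module.Basis (∀ k, Fin (n k)) K
        (MvPolynomial (Fin d) K ⧸ Ideal.span (Set.range p)),
      (∀ i : ∀ k, Fin (n k),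
        B i = Ideal.Quotient.mk (Ideal.span (Set.range p))
          (∏ k, X k ^ (i k : ℕ))) ∧
      Module.finrank K (MvPolynomial (Fin d) K ⧸ Ideal.span (Set.range p)) =
        ∏ k, n k := by
  obtain ⟨B, hB⟩ := htri.exists_basis
  refine ⟨B, hB, ?_⟩
  rw [Module.finrank_eq_card_basis B, Fintype.card_pi]
  simp
end

section
/- If q ∈ K[x_1, ..., x_d] vanishes on every common zero in K^d of a triangular system p_1, ..., p_d whose total number of distinct common zeros is n_1 ⋯ n_d (the maximal case), and q has degree less than n_k in x_k for every k, then q = 0. -/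
/-
Since `p 0` involves `x 0` alone, a common zero `z` has `z 0` among the at most `n 0` roots
`a` of `p 0`, and its tail is a common zero of the triangular system obtained from
`p 1, …, p d` by substituting `x 0 = a`; by induction the zero set has at most `∏ k, n k`
points. If it has exactly that many, `p 0` has `n 0` distinct roots and every fibre is again
maximal, so by induction `q` vanishes identically after each of these `n 0` substitutions.
Viewed as a polynomial in `x 0` over `K[x 1, …, x d]`, `q` has degree `< n 0` and `n 0`
distinct roots, so `q = 0`.
-/

open MvPolynomial

namespace MvPolynomial

variable {R : Type*} [CommRing R] {d : ℕ}

noncomputable def evalFirst (a : R) : MvPolynomial (Fin (d + 1)) R →+* MvPolynomial (Fin d) R :=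
  (Polynomial.evalRingHom (C a)).comp (finSuccEquiv R d).toRingHom

lemma evalFirst_apply (a : R) (f : MvPolynomial (Fin (d + 1)) R) :
    evalFirst a f = (finSuccEquiv R d f).eval (C a) := rfl

@[simp]
lemma eval_evalFirst (a : R) (s : Fin d → R) (f : MvPolynomial (Fin (d + 1)) R) :
    eval s (evalFirst a f) = eval (Fin.cons a s) f := by
  rw [eval_eq_eval_mv_eval', evalFirst_apply, Polynomial.eval_map, Polynomial.eval,
    Polynomial.hom_eval₂, RingHom.comp_id, eval_C]

@[simp]
lemma evalFirst_X_zero (a : R) : evalFirst a (X 0 : MvPolynomial (Fin (d + 1)) R) = C a := by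
  simp [evalFirst_apply, finSuccEquiv_X_zero]

@[simp]
lemma evalFirst_X_succ (a : R) (j : Fin d) :
    evalFirst a (X j.succ : MvPolynomial (Fin (d + 1)) R) = X j := by
  simp [evalFirst_apply, finSuccEquiv_X_succ]

lemma degreeOf_evalFirst_le (a : R) (f : MvPolynomial (Fin (d + 1)) R) (j : Fin d) :
    degreeOf j (evalFirst a f) ≤ degreeOf j.succ f := by
  rw [evalFirst_apply, Polynomial.eval_eq_sum_range]
  refine (degreeOf_sum_le _ _ _).trans (Finset.sup_le fun i _ => ?_)
  refine (degreeOf_mul_le _ _ _).trans ?_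
  rw [← C_pow, degreeOf_C, add_zero]
  exact degreeOf_coeff_finSuccEquiv f j i

lemma succ_mem_vars_of_mem_vars_evalFirst {a : R} {f : MvPolynomial (Fin (d + 1)) R} {j : Fin d}
    (hj : j ∈ (evalFirst a f).vars) : j.succ ∈ f.vars := by
  rw [mem_vars_iff_degreeOf_ne_zero] at hj ⊢
  have := degreeOf_evalFirst_le a f j
  omega

variable [IsDomain R]

lemma C_mem_roots_of_evalFirst_eq_zero {f : MvPolynomial (Fin (d + 1)) R} (hf : f ≠ 0) {a : R}
    (ha : evalFirst a f = 0) : C a ∈ (finSuccEquiv R d f).roots :=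
  (Polynomial.mem_roots ((finSuccEquiv R d).map_ne_zero_iff.mpr hf)).mpr ha

lemma finite_setOf_evalFirst_eq_zero {f : MvPolynomial (Fin (d + 1)) R} (hf : f ≠ 0) :
    {a | evalFirst a f = 0}.Finite :=
  ((finSuccEquiv R d f).roots.finite_toSet.preimage (C_injective _ _).injOn).subset
    fun _ ↦ C_mem_roots_of_evalFirst_eq_zero hf

lemma ncard_setOf_evalFirst_eq_zero_le {f : MvPolynomial (Fin (d + 1)) R} (hf : f ≠ 0) :
    {a | evalFirst a f = 0}.ncard ≤ degreeOf 0 f := by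
  classical
  calc {a | evalFirst a f = 0}.ncard
      ≤ ((finSuccEquiv R d f).roots.toFinset : Set (MvPolynomial (Fin d) R)).ncard :=
        Set.ncard_le_ncard_of_injOn C
          (fun _ ha ↦ Multiset.mem_toFinset.mpr (C_mem_roots_of_evalFirst_eq_zero hf ha))
          (C_injective _ _).injOn (Finset.finite_toSet _)
    _ ≤ (finSuccEquiv R d f).roots.card := by
        rw [Set.ncard_coe_finset]; exact Multiset.toFinset_card_le _
    _ ≤ degreeOf 0 f := natDegree_finSuccEquiv f ▸ Polynomial.card_roots' _

lemma eq_zero_of_forall_evalFirst_eq_zero {f : MvPolynomial (Fin (d + 1)) R} {s : Set R}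
    (hs : degreeOf 0 f < s.ncard) (h : ∀ a ∈ s, evalFirst a f = 0) : f = 0 := by
  by_contra hf
  have := (Set.ncard_le_ncard h (finite_setOf_evalFirst_eq_zero hf)).trans
    (ncard_setOf_evalFirst_eq_zero_le hf)
  omega

end MvPolynomial

namespace Set

variable {α : Type*} {d : ℕ} {S : Set (Fin (d + 1) → α)}

lemma eq_biUnion_image_cons_preimage_cons {R : Set α} (hS : ∀ z ∈ S, z 0 ∈ R) :
    S = ⋃ a ∈ R, Fin.cons a '' (Fin.cons a ⁻¹' S) := by
  ext z
  simp only [mem_iUnion, mem_image, mem_preimage, exists_prop]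
  constructor
  · exact fun hz ↦
      ⟨z 0, hS z hz, Fin.tail z, by rwa [Fin.cons_self_tail], Fin.cons_self_tail z⟩
  · rintro ⟨a, -, s, hs, rfl⟩
    exact hs

lemma Finite.of_finite_preimage_cons {R : Set α} (hR : R.Finite) (hS : ∀ z ∈ S, z 0 ∈ R)
    (h : ∀ a ∈ R, (Fin.cons a ⁻¹' S).Finite) : S.Finite := by
  rw [eq_biUnion_image_cons_preimage_cons hS]
  exact hR.biUnion fun a ha ↦ (h a ha).image _

lemma ncard_eq_sum_ncard_preimage_cons {R : Finset α} (hS : ∀ z ∈ S, z 0 ∈ R)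
    (h : ∀ a ∈ R, (Fin.cons a ⁻¹' S).Finite) :
    S.ncard = ∑ a ∈ R, (Fin.cons a ⁻¹' S).ncard := by
  have hdisj : (R : Set α).PairwiseDisjoint fun a ↦ Fin.cons a '' (Fin.cons a ⁻¹' S) := by
    intro a _ b _ hab
    refine disjoint_left.mpr ?_
    rintro _ ⟨s, -, rfl⟩ ⟨t, -, hts⟩
    exact hab (by simpa using (congrFun hts 0).symm)
  conv_lhs => rw [eq_biUnion_image_cons_preimage_cons hS]
  rw [R.finite_toSet.ncard_biUnion (fun a ha ↦ (h a ha).image _) hdisj, finsum_mem_coe_finset]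
  refine Finset.sum_congr rfl fun a _ ↦ ?_
  exact ncard_image_of_injective _ (Fin.cons_right_injective (α := fun _ ↦ α) a)

end Set

lemma Finset.card_eq_and_forall_eq_of_sum_eq_mul {ι : Type*} {s : Finset ι} {f : ι → ℕ}
    {m N : ℕ} (hN : 0 < N) (hs : s.card ≤ m) (hf : ∀ i ∈ s, f i ≤ N)
    (h : ∑ i ∈ s, f i = m * N) : s.card = m ∧ ∀ i ∈ s, f i = N := by
  have hsum : ∑ i ∈ s, f i ≤ s.card * N := (Finset.sum_le_sum hf).trans_eq (by simp)
  have hcard : s.card = m := le_antisymm hs (Nat.le_of_mul_le_mul_right (h ▸ hsum) hN)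
  exact ⟨hcard, (Finset.sum_eq_sum_iff_of_le hf).mp (by simp [h, hcard])⟩

section Triangular

variable {K : Type*} [CommRing K] {d : ℕ}

noncomputable def fiberSystem (a : K) (p : Fin (d + 1) → MvPolynomial (Fin (d + 1)) K) :
    Fin d → MvPolynomial (Fin d) K :=
  fun k ↦ evalFirst a (p k.succ)

def firstRoots (p : Fin (d + 1) → MvPolynomial (Fin (d + 1)) K) : Set K :=
  {a | evalFirst a (p 0) = 0}

lemma preimage_cons_zeroSet {p : Fin (d + 1) → MvPolynomial (Fin (d + 1)) K} {a : K}
    (ha : a ∈ firstRoots p) : Fin.cons a ⁻¹' zeroSet p = zeroSet (fiberSystem a p) := by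
  ext s
  simp only [Set.mem_preimage, zeroSet, Set.mem_ofPred_eq, Fin.forall_fin_succ, fiberSystem,
    eval_evalFirst, and_iff_right_iff_imp]
  intro _
  rw [← eval_evalFirst, ha, map_zero]

namespace IsTriangular

lemma pos_s14 {d : ℕ} {n : Fin d → ℕ} {p : Fin d → MvPolynomial (Fin d) K}
    (h : IsTriangular n p) (k : Fin d) : 0 < n k := by
  obtain ⟨q, -, hq, -⟩ := h k
  omega

section Succ

variable {n : Fin (d + 1) → ℕ} {p : Fin (d + 1) → MvPolynomial (Fin (d + 1)) K}

lemma fiber (h : IsTriangular n p) (a : K) :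
    IsTriangular (Fin.tail n) (fiberSystem a p) := by
  intro k
  obtain ⟨q, hvars, hdeg, hpk⟩ := h k.succ
  refine ⟨evalFirst a q, fun j hj ↦ ?_, (degreeOf_evalFirst_le a q k).trans_lt hdeg, ?_⟩
  · exact Fin.succ_le_succ_iff.mp (hvars _ (succ_mem_vars_of_mem_vars_evalFirst hj))
  · simp [fiberSystem, hpk, Fin.tail]

lemma vars_evalFirst_first (h : IsTriangular n p) (a : K) : (evalFirst a (p 0)).vars = ∅ := by
  classical
  obtain ⟨q, hvars, -, hp0⟩ := h 0
  refine Finset.eq_empty_iff_forall_notMem.mpr fun j hj ↦ ?_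
  rw [hp0, map_add, map_pow, evalFirst_X_zero, ← C_pow] at hj
  rcases Finset.mem_union.mp (vars_add_subset _ _ hj) with hj | hj
  · rw [vars_C] at hj
    exact Finset.notMem_empty _ hj
  · exact Fin.succ_ne_zero j
      (Fin.le_zero_iff.mp (hvars _ (succ_mem_vars_of_mem_vars_evalFirst hj)))

lemma head_mem_firstRoots (h : IsTriangular n p) {z : Fin (d + 1) → K} (hz : z ∈ zeroSet p) :
    z 0 ∈ firstRoots p := by
  have hC := vars_eq_empty_iff_eq_C.mp (h.vars_evalFirst_first (z 0))
  have hz0 := hz 0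
  rw [← Fin.cons_self_tail z, ← eval_evalFirst, hC, eval_C] at hz0
  rw [firstRoots, Set.mem_ofPred_eq, hC, hz0, map_zero]

variable [IsDomain K]

lemma degreeOf_first (h : IsTriangular n p) : degreeOf 0 (p 0) = n 0 := by
  obtain ⟨q, -, hq, hp0⟩ := h 0
  have hlt : (finSuccEquiv K d q).degree <
      (Polynomial.X ^ n 0 : Polynomial (MvPolynomial (Fin d) K)).degree := by
    rw [Polynomial.degree_X_pow]
    refine Polynomial.degree_le_natDegree.trans_lt ?_
    rw [natDegree_finSuccEquiv]
    exact_mod_cast hq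
  rw [← natDegree_finSuccEquiv, hp0, map_add, map_pow, finSuccEquiv_X_zero,
    Polynomial.natDegree_add_eq_left_of_degree_lt hlt, Polynomial.natDegree_X_pow]

lemma first_ne_zero (h : IsTriangular n p) : p 0 ≠ 0 := fun h0 ↦
  (h.pos_s14 0).ne (by rw [← h.degreeOf_first, h0, MvPolynomial.degreeOf_zero])

lemma finite_firstRoots (h : IsTriangular n p) : (firstRoots p).Finite :=
  finite_setOf_evalFirst_eq_zero h.first_ne_zero

lemma ncard_firstRoots_le (h : IsTriangular n p) : (firstRoots p).ncard ≤ n 0 :=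
  h.degreeOf_first ▸ ncard_setOf_evalFirst_eq_zero_le h.first_ne_zero

end Succ

variable [IsDomain K]

theorem finite_zeroSet {d : ℕ} {n : Fin d → ℕ} {p : Fin d → MvPolynomial (Fin d) K}
    (h : IsTriangular n p) : (zeroSet p).Finite := by
  induction d with
  | zero => exact Set.subsingleton_of_subsingleton.finite
  | succ d ih =>
    refine h.finite_firstRoots.of_finite_preimage_cons (fun z hz ↦ h.head_mem_firstRoots hz)
      fun a ha ↦ ?_
    rw [preimage_cons_zeroSet ha]
    exact ih (h.fiber a)

theorem ncard_zeroSet_eq_sum {d : ℕ} {n : Fin (d + 1) → ℕ}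
    {p : Fin (d + 1) → MvPolynomial (Fin (d + 1)) K} (h : IsTriangular n p) :
    (zeroSet p).ncard =
      ∑ a ∈ h.finite_firstRoots.toFinset, (zeroSet (fiberSystem a p)).ncard := by
  rw [Set.ncard_eq_sum_ncard_preimage_cons (R := h.finite_firstRoots.toFinset)
    (fun z hz ↦ by simpa using h.head_mem_firstRoots hz)]
  · refine Finset.sum_congr rfl fun a ha ↦ ?_
    rw [preimage_cons_zeroSet (by simpa using ha)]
  · intro a ha
    rw [preimage_cons_zeroSet (by simpa using ha)]
    exact (h.fiber a).finite_zeroSet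

theorem ncard_zeroSet_le {d : ℕ} {n : Fin d → ℕ} {p : Fin d → MvPolynomial (Fin d) K}
    (h : IsTriangular n p) : (zeroSet p).ncard ≤ ∏ k, n k := by
  induction d with
  | zero => simpa using Set.ncard_le_one_of_subsingleton (zeroSet p)
  | succ d ih =>
    rw [h.ncard_zeroSet_eq_sum, Fin.prod_univ_succ]
    calc ∑ a ∈ h.finite_firstRoots.toFinset, (zeroSet (fiberSystem a p)).ncard
        ≤ ∑ _a ∈ h.finite_firstRoots.toFinset, ∏ k : Fin d, n k.succ :=
          Finset.sum_le_sum fun a _ ↦ ih (h.fiber a)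
      _ = (firstRoots p).ncard * ∏ k : Fin d, n k.succ := by
          rw [Finset.sum_const, smul_eq_mul, Set.ncard_eq_toFinset_card _ h.finite_firstRoots]
      _ ≤ n 0 * ∏ k : Fin d, n k.succ := Nat.mul_le_mul_right _ h.ncard_firstRoots_le

theorem eq_zero_of_ncard_zeroSet_eq {d : ℕ} {n : Fin d → ℕ}
    {p : Fin d → MvPolynomial (Fin d) K} (h : IsTriangular n p)
    (hmax : (zeroSet p).ncard = ∏ k, n k) {q : MvPolynomial (Fin d) K}
    (hvan : ∀ a ∈ zeroSet p, eval a q = 0) (hdeg : ∀ k, q.degreeOf k < n k) : q = 0 := by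
  induction d with
  | zero =>
    obtain ⟨a, ha⟩ := Set.nonempty_of_ncard_ne_zero (s := zeroSet p) (by simp [hmax])
    rw [eq_C_of_isEmpty q] at hvan ⊢
    simpa using hvan a ha
  | succ d ih =>
    have hsum := h.ncard_zeroSet_eq_sum
    rw [hmax, Fin.prod_univ_succ] at hsum
    obtain ⟨hroots, hfibers⟩ := Finset.card_eq_and_forall_eq_of_sum_eq_mul
      (Finset.prod_pos fun k _ ↦ h.pos_s14 k.succ)
      (by rw [← Set.ncard_eq_toFinset_card _ h.finite_firstRoots]; exact h.ncard_firstRoots_le)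
      (fun a _ ↦ (h.fiber a).ncard_zeroSet_le) hsum.symm
    refine eq_zero_of_forall_evalFirst_eq_zero (s := firstRoots p)
      (by rw [Set.ncard_eq_toFinset_card _ h.finite_firstRoots, hroots]; exact hdeg 0)
      fun a ha ↦ ih (h.fiber a) (hfibers a (by simpa using ha)) (fun s hs ↦ ?_)
        fun k ↦ (degreeOf_evalFirst_le a q k).trans_lt (hdeg k.succ)
    rw [eval_evalFirst]
    rw [← preimage_cons_zeroSet ha] at hs
    exact hvan _ hs

end IsTriangular

end Triangular

theorem stmt_14 {K : Type*} [Field K] {d : ℕ}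
    (n : Fin d → ℕ) (p : Fin d → MvPolynomial (Fin d) K)
    (htri : IsTriangular n p)
    (hmax : (zeroSet p).ncard = ∏ k, n k)
    (q : MvPolynomial (Fin d) K)
    (hvan : ∀ a ∈ zeroSet p, eval a q = 0)
    (hdeg : ∀ k, q.degreeOf k < n k) :
    q = 0 :=
  htri.eq_zero_of_ncard_zeroSet_eq hmax hvan hdeg
end
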